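/- Let B be a commutative ring and A = B^n with standard idempotents e_1, ..., e_n. In the quotient ring G(B^n/B) = (B^n)^{⊗n}/I(B^n, B), any monomial e_{i_1}^{(1)} e_{i_2}^{(2)} ⋯ e_{i_n}^{(n)} for which (i_1, ..., i_n) is not a permutation of (1, ..., n) is equal to zero. -/

import Mathlib

open scoped TensorProduct
open PiTensorProduct

/-- The coefficients `s_j(a)` of the characteristic polynomial of multiplication by `a`,
so that `P_a(T) = T^n - s_1(a)T^{n-1} + s_2(a)T^{n-2} - ⋯ + (-1)^n s_n(a)`. -/
noncomputable def sCoeff {B A : Type*} [CommRing B] [CommRing A] [Algebra B A] {n : ℕ}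
    (b : Module.Basis (Fin n) B A) (a : A) (j : ℕ) : B :=
  (-1) ^ j * (Matrix.charpoly (Algebra.leftMulMatrix b a)).coeff (n - j)

/-- The ideal `I(A,B) ⊆ A^{⊗n}` generated by
`s_j(a) - Σ_{i₁<⋯<i_j} a^{(i₁)}⋯a^{(i_j)}` for `a ∈ A`, `1 ≤ j ≤ n`. -/
noncomputable def snIdeal {B A : Type*} [CommRing B] [CommRing A] [Algebra B A] {n : ℕ}
    (b : Module.Basis (Fin n) B A) : Ideal (⨂[B] _ : Fin n, A) :=
  Ideal.span { z | ∃ (a : A) (j : Fin n), z =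
    (algebraMap B (⨂[B] _ : Fin n, A)) (sCoeff b a ((j : ℕ) + 1)) -
      ∑ s ∈ Finset.powersetCard ((j : ℕ) + 1) (Finset.univ : Finset (Fin n)),
        tprod B (fun i => if i ∈ s then a else 1) }

/-- The Sₙ-closure `G(A/B) = A^{⊗n}/I(A,B)`. -/
noncomputable abbrev SnClosure {B A : Type*} [CommRing B] [CommRing A] [Algebra B A] {n : ℕ}
    (b : Module.Basis (Fin n) B A) : Type _ :=
  (⨂[B] _ : Fin n, A) ⧸ snIdeal b

/-- `a^{(i)}`: the image in `G(A/B)` of `1 ⊗ ⋯ ⊗ a ⊗ ⋯ ⊗ 1` with `a` in position `i`. -/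
noncomputable def tf {B A : Type*} [CommRing B] [CommRing A] [Algebra B A] {n : ℕ}
    (b : Module.Basis (Fin n) B A) (a : A) (i : Fin n) : SnClosure b :=
  (Ideal.Quotient.mk (snIdeal b)) (tprod B (fun p => if p = i then a else 1))

/-
If `(i₁,…,iₙ)` is not a permutation, some index `k` is missed. The relation for `s₁` gives
`∑ⱼ e_k^{(j)} = s₁(e_k) = tr(e_k) = 1` in `G(Bⁿ/B)`, and multiplying the monomial by this sum
kills every term, because its `j`-th factor `e_{i_j}` is orthogonal to `e_k`.
-/

theorem Algebra.trace_pi_eq_sum {B ι : Type*} [CommRing B] [Fintype ι] (x : ι → B) :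
    Algebra.trace B (ι → B) x = ∑ j, x j := by
  classical
  simp [Algebra.trace_eq_matrix_trace (Pi.basisFun B ι), Matrix.trace,
    Algebra.leftMulMatrix_eq_repr_mul]

theorem Pi.single_mul_single_of_ne {ι R : Type*} [DecidableEq ι] [MulZeroClass R] {i j : ι}
    (h : i ≠ j) (x y : R) : (Pi.single i x * Pi.single j y : ι → R) = 0 := by
  ext m
  by_cases hm : m = i
  · subst hm
    simp [h]
  · simp [hm]

section SnClosure

variable {B A : Type*} [CommRing B] [CommRing A] [Algebra B A] {n : ℕ}

theorem sCoeff_one [NeZero n] (b : Module.Basis (Fin n) B A) (a : A) :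
    sCoeff b a 1 = Algebra.trace B A a := by
  rw [sCoeff, Algebra.trace_eq_matrix_trace b, Matrix.trace_eq_neg_charpoly_coeff,
    Fintype.card_fin, pow_one, neg_one_mul]

theorem sum_tf_eq_sCoeff_one [NeZero n] (b : Module.Basis (Fin n) B A) (a : A) :
    ∑ j, tf b a j = algebraMap B (SnClosure b) (sCoeff b a 1) := by
  have hrel : algebraMap B _ (sCoeff b a 1) -
      ∑ s ∈ Finset.powersetCard 1 Finset.univ,
        PiTensorProduct.tprod B (fun p => if p ∈ s then a else 1) ∈ snIdeal b :=
    Ideal.subset_span ⟨a, 0, rfl⟩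
  rw [← Ideal.Quotient.eq_zero_iff_mem, map_sub, sub_eq_zero, map_sum,
    Finset.powersetCard_one, Finset.sum_map] at hrel
  simpa [tf] using hrel.symm

theorem sum_tf_eq_trace [NeZero n] (b : Module.Basis (Fin n) B A) (a : A) :
    ∑ j, tf b a j = algebraMap B (SnClosure b) (Algebra.trace B A a) := by
  rw [sum_tf_eq_sCoeff_one, sCoeff_one]

theorem mk_tprod_mul_tf_eq_zero (b : Module.Basis (Fin n) B A) (f : Fin n → A) (a : A)
    (j : Fin n) (h : f j * a = 0) :
    Ideal.Quotient.mk (snIdeal b) (tprod B f) * tf b a j = 0 := by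
  rw [tf, ← map_mul, tprod_mul_tprod, ← Function.update_eq_self j (f * _)]
  simp [h]

end SnClosure

theorem sum_tf_single_eq_one {B : Type*} [CommRing B] {n : ℕ} (k : Fin n) :
    ∑ j, tf (Pi.basisFun B (Fin n)) (Pi.single k 1) j = 1 := by
  have : NeZero n := ⟨k.pos.ne'⟩
  simp [sum_tf_eq_trace, Algebra.trace_pi_eq_sum]

/-- In `G(Bⁿ/B)`, any monomial `e_{i₁}^{(1)} ⋯ e_{iₙ}^{(n)}` with
`(i₁,…,iₙ)` not a permutation of `(1,…,n)` is zero. -/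
theorem non_permutation_monomial_eq_zero {B : Type*} [CommRing B] {n : ℕ}
    (i : Fin n → Fin n) (hi : ¬ Function.Bijective i) :
    (Ideal.Quotient.mk (snIdeal (Pi.basisFun B (Fin n))))
      (PiTensorProduct.tprod B (fun j => Pi.single (i j) (1 : B))) = 0 := by
  obtain ⟨k, hk⟩ : ∃ k, ∀ j, i j ≠ k := by
    simpa [Function.Surjective] using mt Finite.surjective_iff_bijective.mp hi
  rw [← mul_one (Ideal.Quotient.mk _ _), ← sum_tf_single_eq_one k, Finset.mul_sum]
  refine Finset.sum_eq_zero fun j _ => mk_tprod_mul_tf_eq_zero _ _ _ j ?_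
  exact Pi.single_mul_single_of_ne (hk j) 1 1
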